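/- With ρ_μ^φ as above and P₂ the projector onto the total two-photon subspace spanned by {|0,2⟩, |1,1⟩, |2,0⟩}, one has Pr_μ(2)|Ψ₂^±⟩⟨Ψ₂^±| = P₂[ρ_μ^Z ± (½ρ_μ^0 + ½ρ_μ^π) ∓ (½ρ_μ^{π/2} + ½ρ_μ^{3π/2})]P₂, where |Ψ₂^±⟩ = (|0,2⟩±|2,0⟩)/√2, Pr_μ(2) = e^{-μ}μ²/2, and ρ_μ^Z = (1/2π)∫₀^{2π}[½|0⟩⟨0|⊗|√μe^{iθ}⟩⟨√μe^{iθ}| + ½|√μe^{iθ}⟩⟨√μe^{iθ}|⊗|0⟩⟨0|]dθ. -/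

import Mathlib

/-!
In polar form a coherent amplitude is `⟨n|r e^{iθ}⟩ = e^{-r²/2} rⁿ e^{inθ} / √n!`.
On matrix elements `⟨j,k|ρ|j',k'⟩` with `j + k = j' + k'` the global phase `θ` cancels, so phase
randomisation acts trivially inside a fixed-photon-number sector:
`⟨j,k|ρ_μ^φ|j',k'⟩ = e^{-μ} (μ/2)^{j+k} e^{iφ(k-k')} / √(j! k! j'! k'!)`.
In the combination `½(ρ^0 + ρ^π) - ½(ρ^{π/2} + ρ^{3π/2})` the phase `e^{iφ(k-k')}` becomes
`½(1 - i^{k-k'})(1 + (-1)^{k-k'})`, which for `j + k = j' + k' = 2` keeps exactly the two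
coherences `|0,2⟩⟨2,0|` and `|2,0⟩⟨0,2|`, while `ρ_μ^Z` supplies the diagonal terms
`|0,2⟩⟨0,2|` and `|2,0⟩⟨2,0|`; all four come with the weight `e^{-μ} μ²/4 = Pr_μ(2)/2`.
-/


/-- The `n`-th Fock coefficient of the coherent state `|α⟩`. -/
noncomputable def coherentCoeff (α : ℂ) (n : ℕ) : ℂ :=
  Complex.exp (-((‖α‖ : ℂ)) ^ 2 / 2) * α ^ n / (Real.sqrt (Nat.factorial n) : ℂ)

/-- Fock coefficient of the vacuum. -/
noncomputable def vacCoeff (n : ℕ) : ℂ := if n = 0 then 1 else 0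

/-- Fock-basis matrix element of `ρ_μ^φ`. -/
noncomputable def rhoPhiElem (μ φ : ℝ) (j k j' k' : ℕ) : ℂ :=
  (1 / (2 * (Real.pi : ℂ))) *
    ∫ θ in (0:ℝ)..(2 * Real.pi),
      coherentCoeff (Real.sqrt (μ/2) * Complex.exp (Complex.I * θ)) j *
      (starRingEnd ℂ) (coherentCoeff (Real.sqrt (μ/2) * Complex.exp (Complex.I * θ)) j') *
      coherentCoeff (Real.sqrt (μ/2) * Complex.exp (Complex.I * (θ + φ))) k *
      (starRingEnd ℂ) (coherentCoeff (Real.sqrt (μ/2) * Complex.exp (Complex.I * (θ + φ))) k')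

/-- Fock-basis matrix element of the phase-randomized `Z`-basis state `ρ_μ^Z`. -/
noncomputable def rhoZElem (μ : ℝ) (j k j' k' : ℕ) : ℂ :=
  (1 / (2 * (Real.pi : ℂ))) *
    ∫ θ in (0:ℝ)..(2 * Real.pi),
      ((1 : ℂ)/2) *
        (vacCoeff j * (starRingEnd ℂ) (vacCoeff j') *
            coherentCoeff (Real.sqrt μ * Complex.exp (Complex.I * θ)) k *
            (starRingEnd ℂ) (coherentCoeff (Real.sqrt μ * Complex.exp (Complex.I * θ)) k')
          + coherentCoeff (Real.sqrt μ * Complex.exp (Complex.I * θ)) j *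
            (starRingEnd ℂ) (coherentCoeff (Real.sqrt μ * Complex.exp (Complex.I * θ)) j') *
            vacCoeff k * (starRingEnd ℂ) (vacCoeff k'))

/-- Indicator of the total `m`-photon subspace. -/
noncomputable def projElem (m j k : ℕ) : ℂ := if j + k = m then 1 else 0

/-- Fock coefficient of `|Ψ₂⁺⟩ = (|0,2⟩ + |2,0⟩)/√2`. -/
noncomputable def psi2Plus (j k : ℕ) : ℂ :=
  (1 / Real.sqrt 2 : ℝ) *
    ((if j = 0 ∧ k = 2 then 1 else 0) + (if j = 2 ∧ k = 0 then 1 else 0))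

/-- Fock coefficient of `|Ψ₂⁻⟩ = (|0,2⟩ − |2,0⟩)/√2`. -/
noncomputable def psi2Minus (j k : ℕ) : ℂ :=
  (1 / Real.sqrt 2 : ℝ) *
    ((if j = 0 ∧ k = 2 then 1 else 0) - (if j = 2 ∧ k = 0 then 1 else 0))


open Complex
open scoped ComplexConjugate Real

lemma coherentCoeff_ofReal_mul {r : ℝ} (hr : 0 ≤ r) {u : ℂ} (hu : ‖u‖ = 1) (n : ℕ) :
    coherentCoeff (r * u) n
      = ((Real.exp (-r ^ 2 / 2) * r ^ n / √n.factorial : ℝ) : ℂ) * u ^ n := by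
  have hnorm : ‖(r : ℂ) * u‖ = r := by rw [norm_mul, hu, Complex.norm_of_nonneg hr, mul_one]
  rw [coherentCoeff, hnorm, mul_pow]
  push_cast
  ring

lemma coherentCoeff_mul_conj_self (α : ℂ) (n : ℕ) :
    coherentCoeff α n * conj (coherentCoeff α n)
      = ((Real.exp (-‖α‖ ^ 2) * (‖α‖ ^ 2) ^ n / n.factorial : ℝ) : ℂ) := by
  rw [mul_conj']
  have hnorm : ‖coherentCoeff α n‖
      = Real.exp (-‖α‖ ^ 2 / 2) * ‖α‖ ^ n / √n.factorial := by
    rw [coherentCoeff, norm_div, norm_mul, norm_exp, norm_pow,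
      Complex.norm_of_nonneg (by positivity)]
    norm_cast
  have hexp : Real.exp (-‖α‖ ^ 2 / 2) ^ 2 = Real.exp (-‖α‖ ^ 2) := by
    rw [← Real.exp_nat_mul]; ring_nf
  rw [hnorm, ← Complex.ofReal_pow, div_pow, mul_pow, hexp, Real.sq_sqrt (by positivity),
    ← pow_mul, ← pow_mul, mul_comm n]

lemma mul_conj_pow_of_add_eq {u : ℂ} (hu : ‖u‖ = 1) {j k j' k' : ℕ} (h : j + k = j' + k') :
    u ^ j * conj u ^ j' * u ^ k * conj u ^ k' = 1 := by
  have huu : u * conj u = 1 := by rw [mul_conj', hu]; simp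
  calc u ^ j * conj u ^ j' * u ^ k * conj u ^ k' = u ^ (j + k) * conj u ^ (j' + k') := by ring
    _ = 1 := by rw [← h, ← mul_pow, huu, one_pow]

lemma coherentCoeff_mul_conj_mul_of_add_eq {r : ℝ} (hr : 0 ≤ r) {u v : ℂ} (hu : ‖u‖ = 1)
    (hv : ‖v‖ = 1) {j k j' k' : ℕ} (h : j + k = j' + k') :
    coherentCoeff (r * u) j * conj (coherentCoeff (r * u) j')
        * coherentCoeff (r * (u * v)) k * conj (coherentCoeff (r * (u * v)) k')
      = ((Real.exp (-2 * r ^ 2) * (r ^ 2) ^ (j + k)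
          / (√j.factorial * √k.factorial * √j'.factorial * √k'.factorial)
          : ℝ) : ℂ) * (v ^ k * conj v ^ k') := by
  set c : ℕ → ℝ := fun n => Real.exp (-r ^ 2 / 2) * r ^ n / √n.factorial
  have huv : ‖u * v‖ = 1 := by rw [norm_mul, hu, hv, one_mul]
  have hc : c j * c j' * c k * c k' = Real.exp (-2 * r ^ 2) * (r ^ 2) ^ (j + k)
      / (√j.factorial * √k.factorial * √j'.factorial * √k'.factorial) := by
    have hexp : Real.exp (-r ^ 2 / 2) ^ 4 = Real.exp (-2 * r ^ 2) := by
      rw [← Real.exp_nat_mul]; ring_nf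
    have hpow : r ^ j * r ^ j' * r ^ k * r ^ k' = (r ^ 2) ^ (j + k) := by
      rw [← pow_mul, ← pow_add, ← pow_add, ← pow_add]
      congr 1
      omega
    simp only [c, ← hexp, ← hpow]
    ring
  calc coherentCoeff (r * u) j * conj (coherentCoeff (r * u) j')
        * coherentCoeff (r * (u * v)) k * conj (coherentCoeff (r * (u * v)) k')
      = ((c j * c j' * c k * c k' : ℝ) : ℂ) * (u ^ j * conj u ^ j' * u ^ k * conj u ^ k')
          * (v ^ k * conj v ^ k') := by
        rw [coherentCoeff_ofReal_mul hr hu, coherentCoeff_ofReal_mul hr hu,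
          coherentCoeff_ofReal_mul hr huv, coherentCoeff_ofReal_mul hr huv]
        simp only [c, map_mul, map_pow, conj_ofReal]
        push_cast
        ring
    _ = _ := by rw [mul_conj_pow_of_add_eq hu h, mul_one, hc]

lemma inv_two_pi_mul_integral_const (c : ℂ) :
    1 / (2 * (π : ℂ)) * ∫ _ in (0 : ℝ)..2 * π, c = c := by
  have hπ : (π : ℂ) ≠ 0 := ofReal_ne_zero.mpr Real.pi_ne_zero
  rw [intervalIntegral.integral_const, sub_zero, Complex.real_smul]
  push_cast
  field_simp

lemma rhoPhiElem_of_add_eq {μ : ℝ} (hμ : 0 ≤ μ) (φ : ℝ) {j k j' k' : ℕ}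
    (h : j + k = j' + k') :
    rhoPhiElem μ φ j k j' k'
      = ((Real.exp (-μ) * (μ / 2) ^ (j + k)
          / (√j.factorial * √k.factorial * √j'.factorial * √k'.factorial)
          : ℝ) : ℂ) * (exp (φ * I) ^ k * conj (exp (φ * I)) ^ k') := by
  have hr2 : √(μ / 2) ^ 2 = μ / 2 := Real.sq_sqrt (by linarith)
  have hshift (θ : ℝ) : exp (I * (θ + φ)) = exp (I * θ) * exp (φ * I) := by
    rw [mul_add, exp_add, mul_comm I (φ : ℂ)]
  simp only [rhoPhiElem, hshift, coherentCoeff_mul_conj_mul_of_add_eq (Real.sqrt_nonneg _)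
    (norm_exp_I_mul_ofReal _) (norm_exp_ofReal_mul_I φ) h, hr2, inv_two_pi_mul_integral_const]
  ring_nf

lemma rhoZElem_eq_zero (μ : ℝ) {j k j' k' : ℕ} (hj : j ≠ 0 ∨ j' ≠ 0)
    (hk : k ≠ 0 ∨ k' ≠ 0) :
    rhoZElem μ j k j' k' = 0 := by
  unfold rhoZElem
  rcases hj with hj | hj <;> rcases hk with hk | hk <;> simp [vacCoeff, hj, hk]

lemma coherentCoeff_sqrt_mul_conj_self {μ : ℝ} (hμ : 0 ≤ μ) (θ : ℝ) (n : ℕ) :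
    coherentCoeff (√μ * exp (I * θ)) n * conj (coherentCoeff (√μ * exp (I * θ)) n)
      = ((Real.exp (-μ) * μ ^ n / n.factorial : ℝ) : ℂ) := by
  have hnorm : ‖(√μ : ℂ) * exp (I * θ)‖ ^ 2 = μ := by
    rw [norm_mul, norm_exp_I_mul_ofReal, mul_one, Complex.norm_of_nonneg (Real.sqrt_nonneg μ),
      Real.sq_sqrt hμ]
  rw [coherentCoeff_mul_conj_self, hnorm]

lemma rhoZElem_vacuum_left {μ : ℝ} (hμ : 0 ≤ μ) {n : ℕ} (hn : n ≠ 0) :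
    rhoZElem μ 0 n 0 n = ((Real.exp (-μ) * μ ^ n / n.factorial / 2 : ℝ) : ℂ) := by
  simp only [rhoZElem, vacCoeff, hn, if_true, if_false, map_one, map_zero, one_mul, mul_zero,
    add_zero, coherentCoeff_sqrt_mul_conj_self hμ, inv_two_pi_mul_integral_const]
  push_cast
  ring

lemma rhoZElem_vacuum_right {μ : ℝ} (hμ : 0 ≤ μ) {n : ℕ} (hn : n ≠ 0) :
    rhoZElem μ n 0 n 0 = ((Real.exp (-μ) * μ ^ n / n.factorial / 2 : ℝ) : ℂ) := by
  simp only [rhoZElem, vacCoeff, hn, if_true, if_false, map_one, map_zero, mul_one, zero_mul,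
    zero_add, coherentCoeff_sqrt_mul_conj_self hμ, inv_two_pi_mul_integral_const]
  push_cast
  ring

def fockBasis (a b j k : ℕ) : ℂ := if j = a ∧ k = b then 1 else 0

@[simp]
lemma conj_fockBasis (a b j k : ℕ) : conj (fockBasis a b j k) = fockBasis a b j k := by
  unfold fockBasis; split_ifs <;> simp

lemma fockBasis_eq_zero_of_add_ne {a b j k : ℕ} (h : j + k ≠ a + b) : fockBasis a b j k = 0 :=
  if_neg fun ⟨hj, hk⟩ => h (hj ▸ hk ▸ rfl)

lemma psi2Plus_eq_fockBasis (j k : ℕ) :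
    psi2Plus j k = ((1 / √2 : ℝ) : ℂ) * (fockBasis 0 2 j k + fockBasis 2 0 j k) := rfl

lemma psi2Minus_eq_fockBasis (j k : ℕ) :
    psi2Minus j k = ((1 / √2 : ℝ) : ℂ) * (fockBasis 0 2 j k - fockBasis 2 0 j k) := rfl

lemma exp_three_pi_div_two_mul_I : exp (3 * π / 2 * I) = -I := by
  rw [show (3 * π / 2 * I : ℂ) = π * I + π / 2 * I by ring, exp_add, exp_pi_mul_I,
    exp_pi_div_two_mul_I, neg_one_mul]

lemma rhoZElem_of_two_photon {μ : ℝ} (hμ : 0 ≤ μ) {j k j' k' : ℕ} (h : j + k = 2)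
    (h' : j' + k' = 2) :
    rhoZElem μ j k j' k' = ((Real.exp (-μ) * μ ^ 2 / 4 : ℝ) : ℂ) *
      (fockBasis 0 2 j k * fockBasis 0 2 j' k' + fockBasis 2 0 j k * fockBasis 2 0 j' k') := by
  rcases Nat.add_eq_two_iff.mp h with ⟨rfl, rfl⟩ | ⟨rfl, rfl⟩ | ⟨rfl, rfl⟩ <;>
    rcases Nat.add_eq_two_iff.mp h' with ⟨rfl, rfl⟩ | ⟨rfl, rfl⟩ | ⟨rfl, rfl⟩ <;>
    simp [fockBasis, rhoZElem_vacuum_left hμ, rhoZElem_vacuum_right hμ, rhoZElem_eq_zero] <;>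
    ring

lemma rhoPhiElem_phase_contrast_of_two_photon {μ : ℝ} (hμ : 0 ≤ μ) {j k j' k' : ℕ}
    (h : j + k = 2) (h' : j' + k' = 2) :
    ((1 : ℂ) / 2 * rhoPhiElem μ 0 j k j' k' + (1 : ℂ) / 2 * rhoPhiElem μ π j k j' k')
      - ((1 : ℂ) / 2 * rhoPhiElem μ (π / 2) j k j' k'
          + (1 : ℂ) / 2 * rhoPhiElem μ (3 * π / 2) j k j' k')
      = ((Real.exp (-μ) * μ ^ 2 / 4 : ℝ) : ℂ) *
        (fockBasis 0 2 j k * fockBasis 2 0 j' k' + fockBasis 2 0 j k * fockBasis 0 2 j' k') := by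
  have hsqrt2 : ((√2 : ℝ) : ℂ) * (√2 : ℝ) = 2 := by
    rw [← ofReal_mul, Real.mul_self_sqrt zero_le_two, ofReal_ofNat]
  simp only [rhoPhiElem_of_add_eq hμ _ (h.trans h'.symm), h]
  push_cast
  simp only [exp_pi_mul_I, exp_pi_div_two_mul_I, exp_three_pi_div_two_mul_I, zero_mul, exp_zero,
    map_neg, map_one, conj_I]
  rcases Nat.add_eq_two_iff.mp h with ⟨rfl, rfl⟩ | ⟨rfl, rfl⟩ | ⟨rfl, rfl⟩ <;>
    rcases Nat.add_eq_two_iff.mp h' with ⟨rfl, rfl⟩ | ⟨rfl, rfl⟩ | ⟨rfl, rfl⟩ <;>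
    simp [fockBasis, hsqrt2] <;>
    ring

/-- Decoy decomposition of the two-photon cat states:
`Pr_μ(2)|Ψ₂^±⟩⟨Ψ₂^±| = P₂[ρ_μ^Z ± (½ρ_μ^0 + ½ρ_μ^π) ∓ (½ρ_μ^{π/2} + ½ρ_μ^{3π/2})]P₂`,
as equalities of Fock-basis matrix elements. -/
theorem two_photon_decoy_decomposition (μ : ℝ) (hμ : 0 < μ) (j k j' k' : ℕ) :
    ((Real.exp (-μ) * μ ^ 2 / 2 : ℝ) : ℂ) * psi2Plus j k * (starRingEnd ℂ) (psi2Plus j' k')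
      = projElem 2 j k *
          (rhoZElem μ j k j' k'
            + (((1:ℂ)/2) * rhoPhiElem μ 0 j k j' k' + ((1:ℂ)/2) * rhoPhiElem μ Real.pi j k j' k')
            - (((1:ℂ)/2) * rhoPhiElem μ (Real.pi/2) j k j' k'
                + ((1:ℂ)/2) * rhoPhiElem μ (3 * Real.pi/2) j k j' k')) *
          projElem 2 j' k'
    ∧ ((Real.exp (-μ) * μ ^ 2 / 2 : ℝ) : ℂ) * psi2Minus j k * (starRingEnd ℂ) (psi2Minus j' k')
      = projElem 2 j k *
          (rhoZElem μ j k j' k'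
            - (((1:ℂ)/2) * rhoPhiElem μ 0 j k j' k' + ((1:ℂ)/2) * rhoPhiElem μ Real.pi j k j' k')
            + (((1:ℂ)/2) * rhoPhiElem μ (Real.pi/2) j k j' k'
                + ((1:ℂ)/2) * rhoPhiElem μ (3 * Real.pi/2) j k j' k')) *
          projElem 2 j' k' := by
  simp only [psi2Plus_eq_fockBasis, psi2Minus_eq_fockBasis, map_mul, map_add, map_sub, conj_ofReal,
    conj_fockBasis]
  by_cases h : j + k = 2
  swap
  · simp [projElem, h, fockBasis_eq_zero_of_add_ne]
  by_cases h' : j' + k' = 2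
  swap
  · simp [projElem, h', fockBasis_eq_zero_of_add_ne]
  have hZ := rhoZElem_of_two_photon hμ.le h h'
  have hΦ := rhoPhiElem_phase_contrast_of_two_photon hμ.le h h'
  have hs : ((1 / √2 : ℝ) : ℂ) ^ 2 = 1 / 2 := by
    rw [← ofReal_pow, div_pow, Real.sq_sqrt zero_le_two]; norm_num
  simp only [projElem, h, h', if_true, one_mul, mul_one]
  constructor
  · linear_combination (norm := (push_cast; ring))
      -hZ - hΦ + ((Real.exp (-μ) * μ ^ 2 / 2 : ℝ) : ℂ)
        * (fockBasis 0 2 j k + fockBasis 2 0 j k) * (fockBasis 0 2 j' k' + fockBasis 2 0 j' k') * hs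
  · linear_combination (norm := (push_cast; ring))
      -hZ + hΦ + ((Real.exp (-μ) * μ ^ 2 / 2 : ℝ) : ℂ)
        * (fockBasis 0 2 j k - fockBasis 2 0 j k) * (fockBasis 0 2 j' k' - fockBasis 2 0 j' k') * hs
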